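/- Let U : MonCat ⥤ Type be the forgetful functor on the category of monoids and for each natural number n let U^n : MonCat ⥤ Type be the functor sending a monoid M to the type Fin n → U(M) and a monoid homomorphism f to postcomposition with U(f). The map sending a word w : FreeMonoid (Fin n) (equivalently, a list over Fin n) to the natural transformation U^n ⟶ U whose component at a monoid M sends x : Fin n → M to the product of the letters of w evaluated under x (i.e. FreeMonoid.lift x w) is a bijection between FreeMonoid (Fin n) and the natural transformations U^n ⟶ U. -/

import Mathlib

/-! A natural transformation `Uⁿ ⟶ U` is determined, by naturality, by its value at the generic
point `(of 0, …, of (n-1))` of the free monoid on `n` generators: evaluating at any `x : Fin n → M`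
factors through the homomorphism `FreeMonoid.lift x`. That value is a word `w`, and the
transformation is then the operation `x ↦ FreeMonoid.lift x w`. -/

open CategoryTheory

/-- The `n`-th power of the forgetful functor on the category of monoids, sending a monoid `M`
to `Fin n → M` and a homomorphism to postcomposition with it. -/
def forgetPow (n : ℕ) : MonCat.{u} ⥤ Type u where
  obj M := Fin n → M
  map f := TypeCat.ofHom fun x i => f (x i)

namespace forgetPow

universe u

variable {n : ℕ}

def wordOperation (w : FreeMonoid (Fin n)) : forgetPow.{u} n ⟶ forget MonCat.{u} where
  app M := TypeCat.ofHom fun x => FreeMonoid.lift x w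
  naturality := by
    intro M N f
    ext x
    exact (FreeMonoid.hom_map_lift f.hom x w).symm

variable (n) in
abbrev freeObj : MonCat.{u} := MonCat.of (ULift.{u} (FreeMonoid (Fin n)))

variable (n) in
def genericPoint : (forgetPow.{u} n).obj (freeObj n) := fun i => ULift.up (FreeMonoid.of i)

theorem lift_genericPoint (w : FreeMonoid (Fin n)) :
    FreeMonoid.lift (genericPoint.{u} n) w = ULift.up w := by
  have : MulEquiv.ulift.toMonoidHom.comp (FreeMonoid.lift (genericPoint.{u} n)) =
      MonoidHom.id (FreeMonoid (Fin n)) :=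
    FreeMonoid.hom_eq fun _ => rfl
  exact congrArg ULift.up (DFunLike.congr_fun this w)

theorem wordOperation_app_genericPoint (w : FreeMonoid (Fin n)) :
    (wordOperation.{u} w).app (freeObj n) (genericPoint n) = ULift.up w :=
  lift_genericPoint w

def liftHom {M : MonCat.{u}} (x : Fin n → M) : freeObj n ⟶ M :=
  MonCat.ofHom ((FreeMonoid.lift x).comp MulEquiv.ulift.toMonoidHom)

theorem map_liftHom_genericPoint {M : MonCat.{u}} (x : Fin n → M) :
    (forgetPow.{u} n).map (liftHom x) (genericPoint n) = x :=
  funext fun i => FreeMonoid.lift_eval_of x i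

theorem app_eq_lift (α : forgetPow.{u} n ⟶ forget MonCat.{u}) (M : MonCat.{u})
    (x : Fin n → M) : α.app M x = FreeMonoid.lift x (α.app (freeObj n) (genericPoint n)).down :=
  calc α.app M x = α.app M ((forgetPow n).map (liftHom x) (genericPoint n)) := by
        rw [map_liftHom_genericPoint]
    _ = liftHom x (α.app (freeObj n) (genericPoint n)) :=
        ConcreteCategory.congr_hom (α.naturality (liftHom x)) (genericPoint n)

theorem wordOperation_injective : Function.Injective (wordOperation.{u} (n := n)) := by
  intro w₁ w₂ h
  have h₁ := wordOperation_app_genericPoint.{u} w₁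
  rw [h, wordOperation_app_genericPoint] at h₁
  exact ULift.up_injective h₁.symm

theorem eq_wordOperation (α : forgetPow.{u} n ⟶ forget MonCat.{u}) :
    α = wordOperation (α.app (freeObj n) (genericPoint n)).down := by
  ext M x
  exact app_eq_lift α M x

end forgetPow

/-- Reconstruction of the `n`-ary operations `T_U(n, 1) = Nat(Uⁿ, U)` of the Lawvere theory of
monoids from the forgetful functor `U` on the category of monoids: natural transformations
`Uⁿ ⟶ U` correspond exactly to words in the free monoid on `n` generators. -/
theorem monoidOperations_bijective (n : ℕ) :
    Function.Bijective (fun w : FreeMonoid (Fin n) =>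
      ({ app := fun M => TypeCat.ofHom fun x => FreeMonoid.lift x w
         naturality := by
           intro M N f
           ext x
           exact (FreeMonoid.hom_map_lift f.hom x w).symm } :
        forgetPow.{u} n ⟶ forget MonCat.{u})) := by
  change Function.Bijective (forgetPow.wordOperation.{u} (n := n))
  exact ⟨forgetPow.wordOperation_injective, fun α => ⟨_, (forgetPow.eq_wordOperation α).symm⟩⟩
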